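/- arXiv:2009.01447 — 3 statements merged into one kernel-verified Lean document; each statement's English description precedes it below -/
import Mathlib

section
/- Let v be a subharmonic function on (a neighborhood of) the closed ball B̄(0,R) ⊂ ℝ^m, let r ∈ (0,R), and let E ⊆ B̄(0,r) be a Lebesgue-measurable set. Then ∫_E v dλ ≤ (1 + r/(R−r))^m · λ(E) · B_{v⁺}(0,R), where v⁺ = max(v,0) and B_{v⁺}(0,R) is the average of v⁺ over the ball B̄(0,R). -/
open MeasureTheory Metric

/-- A function is subharmonic on a set `U ⊆ ℝ^m` if it is upper semicontinuous on `U`,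
locally integrable on `U`, and satisfies the sub-mean value inequality over every
closed ball contained in `U`. -/
def IsSubharmonicOn {m : ℕ} (v : EuclideanSpace ℝ (Fin m) → ℝ)
    (U : Set (EuclideanSpace ℝ (Fin m))) : Prop :=
  UpperSemicontinuousOn v U ∧ LocallyIntegrableOn v U ∧
    ∀ x ρ, 0 < ρ → closedBall x ρ ⊆ U → v x ≤ ⨍ y in closedBall x ρ, v y

theorem integral_over_E_le (m : ℕ) (v : EuclideanSpace ℝ (Fin m) → ℝ)
    (R r : ℝ) (hr : 0 < r) (hrR : r < R)
    (U : Set (EuclideanSpace ℝ (Fin m))) (hU : IsOpen U)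
    (hUR : closedBall (0 : EuclideanSpace ℝ (Fin m)) R ⊆ U)
    (hv : IsSubharmonicOn v U)
    (E : Set (EuclideanSpace ℝ (Fin m))) (hE : MeasurableSet E)
    (hEr : E ⊆ closedBall (0 : EuclideanSpace ℝ (Fin m)) r) :
    ∫ y in E, v y ≤ (1 + r / (R - r)) ^ m * (volume E).toReal *
      ⨍ y in closedBall (0 : EuclideanSpace ℝ (Fin m)) R, max (v y) 0 := by
  obtain ⟨husc, hloc, hsub⟩ := hv
  set ρ : ℝ := R - r with hρdef
  have hρ : 0 < ρ := by simp [hρdef]; linarith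
  have hR : 0 < R := hr.trans hrR
  have hfr : Module.finrank ℝ (EuclideanSpace ℝ (Fin m)) = m := by simp
  have hER : E ⊆ closedBall (0 : EuclideanSpace ℝ (Fin m)) R :=
    hEr.trans (closedBall_subset_closedBall hrR.le)
  have hInt : IntegrableOn v (closedBall (0 : EuclideanSpace ℝ (Fin m)) R) :=
    hloc.integrableOn_compact_subset hUR (isCompact_closedBall _ _)
  have hIntp : IntegrableOn (fun y => max (v y) 0)
      (closedBall (0 : EuclideanSpace ℝ (Fin m)) R) := hInt.pos_part
  -- volume facts
  have hc0 : 0 < (volume (ball (0 : EuclideanSpace ℝ (Fin m)) 1)).toReal :=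
    ENNReal.toReal_pos (measure_ball_pos _ _ one_pos).ne' measure_ball_lt_top.ne
  set c : ℝ := (volume (ball (0 : EuclideanSpace ℝ (Fin m)) 1)).toReal with hc
  have hvol : ∀ (x : EuclideanSpace ℝ (Fin m)) (s : ℝ), 0 ≤ s →
      (volume (closedBall x s)).toReal = s ^ m * c := by
    intro x s hs
    rw [Measure.addHaar_closedBall _ _ hs, hfr, ENNReal.toReal_mul,
      ENNReal.toReal_ofReal (pow_nonneg hs m)]
  set A : ℝ := ⨍ y in closedBall (0 : EuclideanSpace ℝ (Fin m)) R, max (v y) 0 with hA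
  set C : ℝ := (R / ρ) ^ m * A with hC
  have hpt : ∀ x ∈ E, v x ≤ C := by
    intro x hx
    have hxr : ‖x‖ ≤ r := by simpa [dist_zero_right] using mem_closedBall.mp (hEr hx)
    have hball : closedBall x ρ ⊆ closedBall (0 : EuclideanSpace ℝ (Fin m)) R :=
      closedBall_subset_closedBall' (by simp [hρdef]; linarith)
    have h1 : v x ≤ ⨍ y in closedBall x ρ, v y := hsub x ρ hρ (hball.trans hUR)
    have h2 : ∫ y in closedBall x ρ, v y ≤
        ∫ y in closedBall (0 : EuclideanSpace ℝ (Fin m)) R, max (v y) 0 := by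
      calc ∫ y in closedBall x ρ, v y ≤ ∫ y in closedBall x ρ, max (v y) 0 :=
            setIntegral_mono_on (hInt.mono_set hball) (hIntp.mono_set hball)
              measurableSet_closedBall (fun y _ => le_max_left _ _)
        _ ≤ _ := setIntegral_mono_set hIntp
              (Filter.Eventually.of_forall fun y => le_max_right _ _)
              (Filter.Eventually.of_forall hball)
    rw [setAverage_eq] at h1
    have hvx : v x ≤ (volume (closedBall x ρ)).toReal⁻¹ *
        ∫ y in closedBall (0 : EuclideanSpace ℝ (Fin m)) R, max (v y) 0 := by
      refine h1.trans ?_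
      simp only [smul_eq_mul]
      exact mul_le_mul_of_nonneg_left h2 (by positivity)
    have hAeq : ∫ y in closedBall (0 : EuclideanSpace ℝ (Fin m)) R, max (v y) 0 =
        (volume (closedBall (0 : EuclideanSpace ℝ (Fin m)) R)).toReal * A := by
      rw [hA, setAverage_eq, measureReal_def, smul_eq_mul, ← mul_assoc, mul_inv_cancel₀, one_mul]
      rw [hvol 0 R hR.le]; positivity
    rw [hAeq, hvol x ρ hρ.le, hvol 0 R hR.le] at hvx
    refine hvx.trans_eq ?_
    rw [hC, div_pow]
    field_simp
  have hμE : volume E < ⊤ :=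
    (measure_mono hER).trans_lt measure_closedBall_lt_top
  have hIntE : IntegrableOn v E := hInt.mono_set hER
  calc ∫ y in E, v y ≤ ∫ _y in E, C :=
        setIntegral_mono_on hIntE (integrableOn_const hμE.ne) hE hpt
    _ = (volume E).toReal * C := by rw [setIntegral_const, smul_eq_mul, measureReal_def]
    _ = (1 + r / (R - r)) ^ m * (volume E).toReal * A := by
        have : 1 + r / (R - r) = R / ρ := by rw [hρdef, eq_div_iff (sub_ne_zero.mpr hrR.ne'), add_mul, div_mul_cancel₀ _ (sub_ne_zero.mpr hrR.ne')]; ring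
        rw [this, hC]; ring
end

section
/- Let E ⊂ ℝ be a measurable set with lim_{r→∞} λ(E ∩ [−r,r])/r = 0. If v : ℝ → ℝ is a convex function of finite order (limsup_{|x|→∞} ln(1+v⁺(x))/ln|x| < ∞) that is bounded above on ℝ ∖ E, then v is constant. -/
open MeasureTheory Filter

private lemma density_contra (E : Set ℝ)
    (hdens : Tendsto (fun r : ℝ => (volume (E ∩ Set.Icc (-r) r)).toReal / r) atTop (nhds 0))
    (R : ℝ) (hR : 0 ≤ R)
    (h : ∀ r, R ≤ r → r - R ≤ (volume (E ∩ Set.Icc (-r) r)).toReal) : False := by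
  have h1 : ∀ᶠ r : ℝ in atTop,
      (volume (E ∩ Set.Icc (-r) r)).toReal / r < 1/2 :=
    hdens.eventually (eventually_lt_nhds (by norm_num : (0:ℝ) < 1/2))
  obtain ⟨r, hr1, hr2⟩ := (h1.and (eventually_ge_atTop (2*R + 1))).exists
  have hrpos : 0 < r := by linarith
  have hle : r - R ≤ (volume (E ∩ Set.Icc (-r) r)).toReal := h r (by linarith)
  have h2 : (r - R)/r ≤ (volume (E ∩ Set.Icc (-r) r)).toReal / r :=
    (div_le_div_iff_of_pos_right hrpos).mpr hle
  have h3 : (r - R)/r < 1/2 := lt_of_le_of_lt h2 hr1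
  have h4 : r - R < 1/2 * r := (div_lt_iff₀ hrpos).mp h3
  linarith

private lemma compl_unbounded_above (E : Set ℝ)
    (hdens : Tendsto (fun r : ℝ => (volume (E ∩ Set.Icc (-r) r)).toReal / r) atTop (nhds 0)) :
    ∀ R : ℝ, ∃ x, x ∉ E ∧ R < x := by
  intro R
  by_contra hc
  push_neg at hc
  have hsub : Set.Ioi R ⊆ E := by
    intro x hx
    by_contra hxE
    exact absurd (hc x hxE) (not_le.mpr hx)
  set R₀ := max R 0 with hR₀
  refine density_contra E hdens R₀ (le_max_right _ _) (fun r hr => ?_)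
  have hsub2 : Set.Ioc R₀ r ⊆ E ∩ Set.Icc (-r) r := by
    intro x hx
    refine ⟨hsub (lt_of_le_of_lt (le_max_left _ _) hx.1), ?_, hx.2⟩
    have : (0:ℝ) ≤ x := le_of_lt (lt_of_le_of_lt (le_max_right _ _) hx.1)
    linarith [le_trans (le_max_right R 0) hr]
  have hfin : volume (E ∩ Set.Icc (-r) r) ≠ ⊤ :=
    (lt_of_le_of_lt (measure_mono Set.inter_subset_right) measure_Icc_lt_top).ne
  have := ENNReal.toReal_mono hfin (measure_mono hsub2)
  rwa [Real.volume_Ioc, ENNReal.toReal_ofReal (by linarith)] at this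

private lemma compl_unbounded_below (E : Set ℝ)
    (hdens : Tendsto (fun r : ℝ => (volume (E ∩ Set.Icc (-r) r)).toReal / r) atTop (nhds 0)) :
    ∀ R : ℝ, ∃ x, x ∉ E ∧ x < R := by
  intro R
  by_contra hc
  push_neg at hc
  have hsub : Set.Iio R ⊆ E := by
    intro x hx
    by_contra hxE
    exact absurd (hc x hxE) (not_le.mpr hx)
  set R₀ := max (-R) 0 with hR₀
  refine density_contra E hdens R₀ (le_max_right _ _) (fun r hr => ?_)
  have hsub2 : Set.Ico (-r) (-R₀) ⊆ E ∩ Set.Icc (-r) r := by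
    intro x hx
    have hx2 : x < R := by
      have : -R ≤ R₀ := le_max_left _ _
      have := hx.2
      linarith
    refine ⟨hsub hx2, hx.1, ?_⟩
    have h0 : (0:ℝ) ≤ R₀ := le_max_right _ _
    have := hx.2
    linarith
  have hfin : volume (E ∩ Set.Icc (-r) r) ≠ ⊤ :=
    (lt_of_le_of_lt (measure_mono Set.inter_subset_right) measure_Icc_lt_top).ne
  have := ENNReal.toReal_mono hfin (measure_mono hsub2)
  rw [Real.volume_Ico, ENNReal.toReal_ofReal (by linarith)] at this
  linarith

/-- A convex function on ℝ bounded above is antitone (hence, with symmetry, constant). -/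
private lemma convex_bddAbove_antitone (v : ℝ → ℝ) (hv : ConvexOn ℝ Set.univ v)
    (M : ℝ) (hM : ∀ x, v x ≤ M) {a b : ℝ} (hab : a < b) : v b ≤ v a := by
  by_contra hc
  push_neg at hc
  set s := (v b - v a) / (b - a) with hs
  have hbapos : 0 < b - a := by linarith
  have hspos : 0 < s := div_pos (by linarith) hbapos
  set t := b + (M + 1 - v b) / s with ht
  have hMb : v b ≤ M := hM b
  have htb : b < t := by
    have h0 : 0 < (M + 1 - v b) / s := div_pos (by linarith) hspos
    rw [ht]; linarith
  have hslope := hv.slope_mono_adjacent (Set.mem_univ a) (Set.mem_univ t) hab htb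
  rw [← hs] at hslope
  have htb' : (0:ℝ) < t - b := by linarith
  have h1 : s * (t - b) ≤ v t - v b := by
    calc s * (t - b) ≤ (v t - v b) / (t - b) * (t - b) :=
          mul_le_mul_of_nonneg_right hslope htb'.le
      _ = v t - v b := div_mul_cancel₀ _ htb'.ne'
  have h2 : t - b = (M + 1 - v b) / s := by rw [ht]; ring
  have h3 : s * ((M + 1 - v b) / s) = M + 1 - v b := by field_simp
  have : M + 1 - v b ≤ v t - v b := by rw [h2, h3] at h1; exact h1
  have := hM t
  linarith

theorem liouville_convex_finite_order (E : Set ℝ) (hE : MeasurableSet E)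
    (hdens : Tendsto (fun r : ℝ => (volume (E ∩ Set.Icc (-r) r)).toReal / r) atTop (nhds 0))
    (v : ℝ → ℝ) (hv : ConvexOn ℝ Set.univ v)
    (hord : ∃ c : ℝ, ∀ᶠ x : ℝ in Filter.cocompact ℝ,
      Real.log (1 + max (v x) 0) / Real.log |x| ≤ c)
    (hbdd : BddAbove (v '' Eᶜ)) :
    ∃ c : ℝ, v = fun _ => c := by
  obtain ⟨M, hM⟩ := hbdd
  have hM' : ∀ x ∉ E, v x ≤ M := fun x hx => hM ⟨x, hx, rfl⟩
  -- v is bounded above everywhere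
  have hMall : ∀ x, v x ≤ M := by
    intro x
    obtain ⟨b, hbE, hxb⟩ := compl_unbounded_above E hdens x
    obtain ⟨a, haE, hax⟩ := compl_unbounded_below E hdens x
    have hseg : x ∈ segment ℝ a b := by
      rw [segment_eq_Icc (by linarith : a ≤ b)]
      exact ⟨le_of_lt hax, le_of_lt hxb⟩
    have := hv.le_on_segment (Set.mem_univ a) (Set.mem_univ b) hseg
    exact le_trans this (max_le (hM' a haE) (hM' b hbE))
  -- antitone from convexity + bound; apply also to x ↦ v (-x)
  have hvneg : ConvexOn ℝ Set.univ (fun x => v (-x)) := by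
    refine ⟨convex_univ, fun x _ y _ p q hp hq hpq => ?_⟩
    have := hv.2 (Set.mem_univ (-x)) (Set.mem_univ (-y)) hp hq hpq
    simpa [smul_neg, neg_add, add_comm] using this
  have key : ∀ a b : ℝ, a < b → v b = v a := by
    intro a b hab
    have h1 := convex_bddAbove_antitone v hv M hMall hab
    have h2 := convex_bddAbove_antitone (fun x => v (-x)) hvneg M
      (fun x => hMall (-x)) (by linarith : -b < -a)
    simp only [neg_neg] at h2
    linarith
  refine ⟨v 0, funext fun x => ?_⟩
  rcases lt_trichotomy x 0 with h | h | h
  · exact (key x 0 h).symm ▸ rfl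
  · rw [h]
  · exact key 0 x h
end

section
/- Suppose F : (0,∞) → [0,∞) is a nonnegative function of finite order, i.e. limsup_{r→∞} ln(1+F(r))/ln r < ∞, and suppose F(r) = o(F(2r)) as r → ∞, in the sense that for every ε > 0 there exists R such that F(r) ≤ ε·F(2r) for all r ≥ R. Then F is eventually identically zero: there exists R₀ such that F(r) = 0 for all r ≥ R₀. -/
open Filter

theorem eventually_zero_of_littleO_doubling (F : ℝ → ℝ)
    (hnonneg : ∀ r > 0, 0 ≤ F r)
    (hord : ∃ c : ℝ, ∀ᶠ r : ℝ in atTop, Real.log (1 + F r) / Real.log r ≤ c)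
    (hlittleo : ∀ ε > 0, ∃ R : ℝ, ∀ r ≥ R, F r ≤ ε * F (2 * r)) :
    ∃ R₀ : ℝ, ∀ r ≥ R₀, F r = 0 := by
  obtain ⟨c₀, hc₀⟩ := hord
  set c : ℝ := max c₀ 1 with hc
  have hc1 : (1:ℝ) ≤ c := le_max_right _ _
  have hcpos : (0:ℝ) < c := lt_of_lt_of_le one_pos hc1
  set ε : ℝ := (2:ℝ) ^ (-(c+1)) with hε
  have hεpos : 0 < ε := Real.rpow_pos_of_pos two_pos _
  obtain ⟨R, hR⟩ := hlittleo ε hεpos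
  obtain ⟨R₁, hR₁⟩ := eventually_atTop.1 hc₀
  refine ⟨max (max R R₁) 2, fun r hr => ?_⟩
  have hr2 : (2:ℝ) ≤ r := le_trans (le_max_right _ _) hr
  have hrR : R ≤ r := le_trans (le_trans (le_max_left _ _) (le_max_left _ _)) hr
  have hrR₁ : R₁ ≤ r := le_trans (le_trans (le_max_right _ _) (le_max_left _ _)) hr
  have hrpos : (0:ℝ) < r := lt_of_lt_of_le two_pos hr2
  -- bound: ∀ s ≥ r, F s ≤ s ^ c
  have hbound : ∀ s, r ≤ s → F s ≤ s ^ c := by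
    intro s hs
    have hspos : (0:ℝ) < s := lt_of_lt_of_le hrpos hs
    have hlogs : 0 < Real.log s := Real.log_pos (by linarith)
    have h1 : Real.log (1 + F s) / Real.log s ≤ c₀ := hR₁ s (le_trans hrR₁ hs)
    have h2 : Real.log (1 + F s) ≤ c * Real.log s := by
      have := (div_le_iff₀ hlogs).1 h1
      nlinarith [le_max_left c₀ (1:ℝ)]
    have hFs : 0 ≤ F s := hnonneg s hspos
    have h3 : (1 : ℝ) + F s ≤ s ^ c := by
      have := Real.exp_le_exp.2 h2
      rw [Real.exp_log (by linarith)] at this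
      exact this.trans_eq (by rw [Real.rpow_def_of_pos hspos, mul_comm])
    linarith
  -- iterate: F r ≤ ε^k * F (2^k * r)
  have hiter : ∀ k : ℕ, F r ≤ ε ^ k * F ((2:ℝ) ^ k * r) := by
    intro k
    induction k with
    | zero => simp
    | succ k ih =>
      have h2k : (1:ℝ) ≤ (2:ℝ) ^ k := one_le_pow₀ (by norm_num)
      have hge : r ≤ (2:ℝ) ^ k * r := le_mul_of_one_le_left hrpos.le h2k
      have := hR ((2:ℝ) ^ k * r) (le_trans hrR hge)
      have h2' : (2:ℝ) * ((2:ℝ) ^ k * r) = (2:ℝ) ^ (k+1) * r := by ring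
      calc F r ≤ ε ^ k * F ((2:ℝ) ^ k * r) := ih
        _ ≤ ε ^ k * (ε * F ((2:ℝ) ^ (k+1) * r)) := by
            rw [← h2']
            exact mul_le_mul_of_nonneg_left this (pow_nonneg hεpos.le k)
        _ = ε ^ (k+1) * F ((2:ℝ) ^ (k+1) * r) := by ring
  -- combine: F r ≤ (1/2)^k * r^c
  have hcomb : ∀ k : ℕ, F r ≤ (1/2:ℝ) ^ k * r ^ c := by
    intro k
    have h2k : (1:ℝ) ≤ (2:ℝ) ^ k := one_le_pow₀ (by norm_num)
    have hge : r ≤ (2:ℝ) ^ k * r := le_mul_of_one_le_left hrpos.le h2k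
    have hFb := hbound ((2:ℝ) ^ k * r) hge
    have h2kpos : (0:ℝ) < (2:ℝ) ^ k := by positivity
    have e1 : ε ^ k = (2:ℝ) ^ (-(c+1) * (k:ℝ)) := by
      rw [hε, ← Real.rpow_natCast ((2:ℝ) ^ (-(c+1))) k, ← Real.rpow_mul (by norm_num : (0:ℝ) ≤ 2)]
    have e2 : ((2:ℝ) ^ k) ^ c = (2:ℝ) ^ ((k:ℝ) * c) := by
      rw [← Real.rpow_natCast (2:ℝ) k, ← Real.rpow_mul (by norm_num : (0:ℝ) ≤ 2)]
    have e3 : ((1:ℝ)/2) ^ k = (2:ℝ) ^ (-(k:ℝ)) := by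
      rw [Real.rpow_neg (by norm_num : (0:ℝ) ≤ 2), Real.rpow_natCast]
      simp [one_div, inv_pow]
    have eexp : -(c+1) * (k:ℝ) + (k:ℝ) * c = -(k:ℝ) := by ring
    have key : ε ^ k * ((2:ℝ) ^ k * r) ^ c = (1/2:ℝ) ^ k * r ^ c := by
      rw [Real.mul_rpow h2kpos.le hrpos.le, e1, e2, e3, ← mul_assoc,
        ← Real.rpow_add two_pos, eexp]
    calc F r ≤ ε ^ k * F ((2:ℝ) ^ k * r) := hiter k
      _ ≤ ε ^ k * ((2:ℝ) ^ k * r) ^ c :=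
          mul_le_mul_of_nonneg_left hFb (pow_nonneg hεpos.le k)
      _ = (1/2:ℝ) ^ k * r ^ c := key
  have htend : Tendsto (fun k : ℕ => (1/2:ℝ) ^ k * r ^ c) atTop (nhds 0) := by
    have := tendsto_pow_atTop_nhds_zero_of_lt_one (by norm_num : (0:ℝ) ≤ 1/2) (by norm_num)
    simpa using this.mul_const (r ^ c)
  have hle : F r ≤ 0 := ge_of_tendsto' htend hcomb
  exact le_antisymm hle (hnonneg r hrpos)
end
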